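/- arXiv:2603.21179 — 2 statements merged into one kernel-verified Lean document; each statement's English description precedes it below -/
import Mathlib

section
/- For every integer d ≥ 2 and every real number L₀ ≥ log d, there exists c ∈ ℂ such that the polynomial f(z) = z^d + c satisfies 𝓛_f = L₀ (equivalently, (d−1)·g_f(0) = L₀ − log d). In particular, the Lyapunov exponent map on degree-d complex polynomials is onto [log d, ∞). -/
open Polynomial

noncomputable section

/-- The `n`-th iterate `f^{∘n}` of a polynomial under composition, with `f^{∘0} = X`. -/
def iterComp {R : Type*} [CommSemiring R] (f : Polynomial R) : ℕ → Polynomial R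
  | 0 => Polynomial.X
  | n + 1 => f.comp (iterComp f n)

/-- Two polynomials `f` and `g` are intertwined if there are an integer `n ≥ 1` and
nonconstant polynomials `S, h₁, h₂` with `f^{∘n} ∘ h₁ = h₁ ∘ S` and `g^{∘n} ∘ h₂ = h₂ ∘ S`. -/
def Intertwined {R : Type*} [CommSemiring R] (f g : Polynomial R) : Prop :=
  ∃ (n : ℕ) (S h₁ h₂ : Polynomial R),
    0 < n ∧ 0 < S.natDegree ∧ 0 < h₁.natDegree ∧ 0 < h₂.natDegree ∧
    (iterComp f n).comp h₁ = h₁.comp S ∧ (iterComp g n).comp h₂ = h₂.comp S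

/-- The forward orbit of `z` under a complex polynomial `f` is bounded;
equivalently, `z` lies in the filled Julia set `K(f)`. -/
def BoundedOrbit (f : Polynomial ℂ) (z : ℂ) : Prop :=
  ∃ M : ℝ, ∀ n : ℕ, ‖(fun w => f.eval w)^[n] z‖ ≤ M

/-- The Green function (escape-rate function) of a polynomial `f` of degree `d ≥ 2`:
`g_f(z) = lim_{n→∞} d^{-n} log⁺ |f^{∘n}(z)|`. -/
def greenFn (f : Polynomial ℂ) (z : ℂ) : ℝ :=
  Filter.limUnder Filter.atTop fun n : ℕ =>
    ((f.natDegree : ℝ) ^ n)⁻¹ * Real.log (max 1 ‖(fun w => f.eval w)^[n] z‖)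

/-- The Lyapunov exponent of `f` given by Przytycki's formula:
`𝓛_f = log d + Σ_c g_f(c)`, summing over the roots of `f'` with multiplicity. -/
def lyap (f : Polynomial ℂ) : ℝ :=
  Real.log (f.natDegree : ℝ) + (f.derivative.roots.map (greenFn f)).sum

/-- The polynomial obtained by applying complex conjugation to every coefficient of `f`. -/
def conjPoly (f : Polynomial ℂ) : Polynomial ℂ := f.map (starRingEnd ℂ)

/-- `f` and `g` are affinely conjugate: `f ∘ L = L ∘ g` for an affine map `L(z) = az + b`, `a ≠ 0`. -/
def AffineConj {K : Type*} [Field K] (f g : Polynomial K) : Prop :=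
  ∃ a b : K, a ≠ 0 ∧ f.comp (C a * X + C b) = (C a * X + C b).comp g

/-- `T` is the normalized degree-`d` Chebyshev polynomial: the monic polynomial of degree `d`
satisfying `T(z + z⁻¹) = z^d + z^{-d}`. -/
def IsNormalizedChebyshev {K : Type*} [Field K] (d : ℕ) (T : Polynomial K) : Prop :=
  T.Monic ∧ T.natDegree = d ∧ ∀ z : K, z ≠ 0 → T.eval (z + z⁻¹) = z ^ d + (z⁻¹) ^ d

/-- A polynomial of degree `d` is exceptional if it is affinely conjugate to `z^d` or to `±T_d`. -/
def Exceptional {K : Type*} [Field K] (d : ℕ) (f : Polynomial K) : Prop :=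
  AffineConj f (X ^ d) ∨
    ∃ T : Polynomial K, IsNormalizedChebyshev d T ∧ (AffineConj f T ∨ AffineConj f (-T))

/-- A fixed algebraic closure `ℚ̄` of `ℚ`. -/
abbrev Qbar := AlgebraicClosure ℚ

/-- The least common multiple of the denominators of the coefficients of a rational polynomial. -/
def denomLcm (p : Polynomial ℚ) : ℕ :=
  (Finset.range (p.natDegree + 1)).lcm fun i => (p.coeff i).den

/-- The absolute logarithmic Weil height of an algebraic number `x ∈ ℚ̄`, via the Mahler-measure
formula: `h(x) = (1/n) log (D ∏ᵢ max(1,|xᵢ|))` where `n` is the degree of the minimal polynomial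
of `x` over `ℚ`, `D` is the lcm of the denominators of its coefficients (so that `D·minpoly` is
the primitive integer minimal polynomial), and the `xᵢ` are the complex conjugates of `x`. -/
def weilHeight (x : Qbar) : ℝ :=
  ((minpoly ℚ x).natDegree : ℝ)⁻¹ *
    Real.log ((denomLcm (minpoly ℚ x) : ℝ) *
      (((minpoly ℚ x).map (algebraMap ℚ ℂ)).roots.map fun α => max 1 ‖α‖).prod)

/-- The canonical height `ĥ_f(a) = lim_{n→∞} d^{-n} h(f^{∘n}(a))` of `a ∈ ℚ̄` for a polynomial
`f ∈ ℚ̄[z]` of degree `d ≥ 2`. -/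
def canHeight (f : Polynomial Qbar) (a : Qbar) : ℝ :=
  Filter.limUnder Filter.atTop fun n : ℕ =>
    ((f.natDegree : ℝ) ^ n)⁻¹ * weilHeight ((fun w => f.eval w)^[n] a)

/-- The critical height `ĥ_crit(f) = Σ_c ĥ_f(c)`, summing over the roots of `f'` in `ℚ̄`
counted with multiplicity. -/
def critHeight (f : Polynomial Qbar) : ℝ :=
  (f.derivative.roots.map (canHeight f)).sum

end

/-!
For `f_c(w) = w ^ d + c` one has `|log⁺ |f_c w| - d log⁺ |w|| ≤ log⁺ |c| + log 2`, so the sequence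
`d⁻ⁿ log⁺ |f_cⁿ(0)|` converges geometrically fast, locally uniformly in `c`. Hence
`c ↦ g_{f_c}(0)` is continuous; it vanishes at `c = 0` and is at least `log⁺ x / d` at real
`x ≥ 0`, because the real orbit of `0` dominates `x ^ dⁿ`. By the intermediate value theorem it
takes every value in `[0, ∞)`, and the only critical point of `f_c` is `0`, of multiplicity
`d - 1`.
-/

open Filter Topology Real Function

noncomputable def escapeRate {α : Type*} (F : α → α) (h : α → ℝ) (d : ℝ) (z : α) : ℝ :=
  limUnder atTop fun n : ℕ => (d ^ n)⁻¹ * h (F^[n] z)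

section EscapeRate

variable {α : Type*} {F : α → α} {h : α → ℝ} {d B : ℝ}

theorem dist_inv_pow_mul_iterate_succ_le (hd : 0 < d) (hF : ∀ w, |h (F w) - d * h w| ≤ B)
    (z : α) (n : ℕ) :
    dist ((d ^ n)⁻¹ * h (F^[n] z)) ((d ^ (n + 1))⁻¹ * h (F^[n + 1] z)) ≤ B / d * (1 / d) ^ n := by
  set w := F^[n] z
  have hdiff : (d ^ (n + 1))⁻¹ * h (F w) - (d ^ n)⁻¹ * h w
      = (d ^ (n + 1))⁻¹ * (h (F w) - d * h w) := by
    rw [pow_succ]; field_simp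
  calc dist ((d ^ n)⁻¹ * h w) ((d ^ (n + 1))⁻¹ * h (F^[n + 1] z))
      = (d ^ (n + 1))⁻¹ * |h (F w) - d * h w| := by
        rw [iterate_succ_apply', Real.dist_eq, abs_sub_comm, hdiff, abs_mul,
          abs_of_pos (by positivity)]
    _ ≤ (d ^ (n + 1))⁻¹ * B := by gcongr; exact hF w
    _ = B / d * (1 / d) ^ n := by rw [one_div_pow, pow_succ]; field_simp

theorem tendsto_escapeRate (hd : 1 < d) (hF : ∀ w, |h (F w) - d * h w| ≤ B) (z : α) :
    Tendsto (fun n : ℕ => (d ^ n)⁻¹ * h (F^[n] z)) atTop (𝓝 (escapeRate F h d z)) :=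
  (cauchySeq_of_le_geometric _ _ ((div_lt_one (by linarith)).2 hd)
    (dist_inv_pow_mul_iterate_succ_le (by linarith) hF z)).tendsto_limUnder

theorem dist_escapeRate_le (hd : 1 < d) (hF : ∀ w, |h (F w) - d * h w| ≤ B) (z : α) (n : ℕ) :
    dist ((d ^ n)⁻¹ * h (F^[n] z)) (escapeRate F h d z) ≤ B / (d - 1) / d ^ n := by
  refine (dist_le_of_le_geometric_of_tendsto _ _ ((div_lt_one (by linarith)).2 hd)
    (dist_inv_pow_mul_iterate_succ_le (by linarith) hF z) (tendsto_escapeRate hd hF z) n).trans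
    (le_of_eq ?_)
  have : d - 1 ≠ 0 := by linarith
  rw [one_div_pow]
  field_simp

theorem escapeRate_eq_zero_of_isFixedPt {z : α} (hz : IsFixedPt F z) (h₀ : h z = 0) :
    escapeRate F h d z = 0 := by
  rw [escapeRate]
  simp_rw [(hz.iterate _).eq, h₀, mul_zero]
  exact tendsto_const_nhds.limUnder_eq

theorem continuous_escapeRate {P : Type*} [TopologicalSpace P] [LocallyCompactSpace P]
    {F : P → α → α} {B : P → ℝ} (hd : 1 < d) (hB : Continuous B)
    (hF : ∀ p w, |h (F p w) - d * h w| ≤ B p) (z : α)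
    (hcont : ∀ n, Continuous fun p => h ((F p)^[n] z)) :
    Continuous fun p => escapeRate (F p) h d z := by
  refine TendstoLocallyUniformly.continuous (p := atTop)
    (F := fun n p => (d ^ n)⁻¹ * h ((F p)^[n] z)) ?_
    (Frequently.of_forall fun n => continuous_const.mul (hcont n))
  rw [tendstoLocallyUniformly_iff_forall_isCompact]
  intro K hK
  obtain ⟨M, hM⟩ := hK.bddAbove_image hB.continuousOn
  have hsmall : Tendsto (fun n : ℕ => M / (d - 1) / d ^ n) atTop (𝓝 0) :=
    tendsto_const_nhds.div_atTop (tendsto_pow_atTop_atTop_of_one_lt hd)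
  rw [Metric.tendstoUniformlyOn_iff]
  intro ε hε
  filter_upwards [hsmall.eventually (gt_mem_nhds hε)] with n hn p hp
  rw [dist_comm]
  calc dist _ _ ≤ B p / (d - 1) / d ^ n := dist_escapeRate_le hd (hF p) z n
    _ ≤ M / (d - 1) / d ^ n := by
      have : 0 < d - 1 := by linarith
      gcongr
      exact hM ⟨p, hp, rfl⟩
    _ < ε := hn

end EscapeRate

theorem greenFn_eq_escapeRate (f : Polynomial ℂ) (z : ℂ) :
    greenFn f z = escapeRate (fun w => f.eval w) (fun w => log⁺ ‖w‖) f.natDegree z := by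
  simp only [greenFn, escapeRate, posLog_eq_log_max_one (norm_nonneg _)]

theorem abs_posLog_norm_pow_add_sub_le {𝕜 : Type*} [NormedDivisionRing 𝕜] (d : ℕ) (c w : 𝕜) :
    |log⁺ ‖w ^ d + c‖ - d * log⁺ ‖w‖| ≤ log⁺ ‖c‖ + log 2 := by
  have hpow : log⁺ ‖w ^ d‖ = d * log⁺ ‖w‖ := by rw [norm_pow, posLog_pow]
  rw [abs_le, ← hpow]
  constructor
  · have := posLog_norm_add_le (w ^ d + c) (-c)
    rw [add_neg_cancel_right, norm_neg] at this
    linarith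
  · linarith [posLog_norm_add_le (w ^ d) c]

theorem pow_pow_le_iterate_pow_add {x : ℝ} (hx : 0 ≤ x) (d n : ℕ) :
    x ^ d ^ n ≤ (fun t => t ^ d + x)^[n + 1] 0 := by
  induction n with
  | zero => simp [pow_nonneg le_rfl]
  | succ n ih =>
    rw [iterate_succ_apply', pow_succ, pow_mul]
    have := pow_le_pow_left₀ (by positivity) ih d
    linarith

section Unicritical

variable {d : ℕ}

theorem greenFn_X_pow_add_C (c z : ℂ) :
    greenFn (X ^ d + C c) z = escapeRate (fun w => w ^ d + c) (fun w => log⁺ ‖w‖) d z := by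
  simp [greenFn_eq_escapeRate]

theorem continuous_greenFn_X_pow_add_C (hd : 2 ≤ d) (z : ℂ) :
    Continuous fun c : ℂ => greenFn (X ^ d + C c) z := by
  simp only [greenFn_X_pow_add_C]
  refine continuous_escapeRate (by exact_mod_cast hd) (by fun_prop)
    (fun c w => abs_posLog_norm_pow_add_sub_le d c w) z fun n => ?_
  have : Continuous fun c : ℂ => (fun w => w ^ d + c)^[n] z := by
    induction n with
    | zero => exact continuous_const
    | succ n ih => simp only [iterate_succ_apply']; exact (ih.pow d).add continuous_id
  fun_prop

theorem greenFn_X_pow_zero (hd : d ≠ 0) : greenFn (X ^ d : ℂ[X]) 0 = 0 := by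
  simpa using (greenFn_X_pow_add_C (d := d) 0 0).trans
    (escapeRate_eq_zero_of_isFixedPt (by simp [IsFixedPt, hd]) (by simp))

theorem posLog_div_le_greenFn_X_pow_add_C (hd : 2 ≤ d) {x : ℝ} (hx : 0 ≤ x) :
    log⁺ x / d ≤ greenFn (X ^ d + C (x : ℂ)) 0 := by
  rw [greenFn_X_pow_add_C]
  have hlim := (tendsto_add_atTop_iff_nat 1).2 (tendsto_escapeRate
    (F := fun w : ℂ => w ^ d + x) (h := fun w => log⁺ ‖w‖) (Nat.one_lt_cast.2 hd)
    (abs_posLog_norm_pow_add_sub_le d (x : ℂ)) 0)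
  refine ge_of_tendsto' hlim fun n => ?_
  have hreal : (fun w : ℂ => w ^ d + x)^[n + 1] 0 = ((fun t : ℝ => t ^ d + x)^[n + 1] 0 : ℝ) :=
    (Semiconj.iterate_right (f := ((↑) : ℝ → ℂ)) (fun t => by push_cast; rfl) (n + 1) 0).symm
  calc log⁺ x / d = ((d : ℝ) ^ (n + 1))⁻¹ * log⁺ (x ^ d ^ n) := by
        rw [posLog_pow]; push_cast; field_simp; ring
    _ ≤ ((d : ℝ) ^ (n + 1))⁻¹ * log⁺ ‖(fun w : ℂ => w ^ d + x)^[n + 1] 0‖ := by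
        rw [hreal, Complex.norm_real]
        gcongr
        exact (pow_pow_le_iterate_pow_add hx d n).trans (Real.le_norm_self _)

theorem exists_greenFn_X_pow_add_C_eq (hd : 2 ≤ d) {t : ℝ} (ht : 0 ≤ t) :
    ∃ c : ℂ, greenFn (X ^ d + C c) 0 = t := by
  have hlog : log⁺ (exp (d * t)) / d = t := by
    rw [posLog_eq_log (by rw [abs_of_pos (exp_pos _)]; exact one_le_exp (by positivity)), log_exp]
    field_simp
  obtain ⟨x, -, hx⟩ := intermediate_value_Icc (exp_pos (d * t)).le
    ((continuous_greenFn_X_pow_add_C hd 0).comp Complex.continuous_ofReal).continuousOn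
    ⟨by simp [greenFn_X_pow_zero (by omega : d ≠ 0), ht],
      hlog ▸ posLog_div_le_greenFn_X_pow_add_C hd (exp_pos _).le⟩
  exact ⟨x, hx⟩

theorem lyap_X_pow_add_C (hd : d ≠ 0) (c : ℂ) :
    lyap (X ^ d + C c) = log d + (d - 1) * greenFn (X ^ d + C c) 0 := by
  have hroots : (derivative (X ^ d + C c)).roots = Multiset.replicate (d - 1) 0 := by
    rw [derivative_add, derivative_C, derivative_X_pow, add_zero,
      roots_C_mul_X_pow (Nat.cast_ne_zero.2 hd), Multiset.nsmul_singleton]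
  rw [lyap, natDegree_X_pow_add_C, hroots, Multiset.map_replicate, Multiset.sum_replicate,
    nsmul_eq_mul, Nat.cast_sub (Nat.one_le_iff_ne_zero.2 hd), Nat.cast_one]

end Unicritical

/-- For every `d ≥ 2` and every real `L₀ ≥ log d`, there is `c ∈ ℂ` such that
`f(z) = z^d + c` has `𝓛_f = L₀` (equivalently `(d-1)·g_f(0) = L₀ - log d`). -/
theorem lyap_surjective_unicritical (d : ℕ) (hd : 2 ≤ d) (L₀ : ℝ)
    (hL : Real.log (d : ℝ) ≤ L₀) :
    ∃ c : ℂ, lyap (X ^ d + C c) = L₀ ∧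
      ((d : ℝ) - 1) * greenFn (X ^ d + C c) 0 = L₀ - Real.log (d : ℝ) := by
  have hd₁ : (0 : ℝ) < d - 1 := by
    have : (2 : ℝ) ≤ d := by exact_mod_cast hd
    linarith
  obtain ⟨c, hc⟩ := exists_greenFn_X_pow_add_C_eq hd
    (div_nonneg (sub_nonneg.2 hL) hd₁.le : 0 ≤ (L₀ - log d) / (d - 1))
  have hgreen : ((d : ℝ) - 1) * greenFn (X ^ d + C c) 0 = L₀ - log d := by
    rw [hc]; field_simp
  exact ⟨c, by rw [lyap_X_pow_add_C (by omega), hgreen]; ring, hgreen⟩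
end

section
/- For every integer d ≥ 2, the polynomials z^d and T_d (the unique monic polynomial of degree d with T_d(z + z⁻¹) = z^d + z^{−d}) are not intertwined; in particular they satisfy the semiconjugacy T_d(w + w⁻¹) = w^d + w^{−d} for all w ∈ ℂ \ {0}, yet no relation f^{∘n} ∘ h₁ = h₁ ∘ R, g^{∘n} ∘ h₂ = h₂ ∘ R with nonconstant polynomials R, h₁, h₂ ∈ ℂ[z] and n ≥ 1 holds for f = z^d, g = T_d. -/
open Polynomial

/-!
If `z^D ∘ h₁ = h₁ ∘ S` with `D = d^n`, then `S` maps the roots of `h₁` onto themselves, hence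
injectively, and no other point is sent to a root; so over each root `w` the polynomial `S - w`
has a single root. Since `D ≥ 2`, that root is the unique critical point of `S`, which is
therefore a fixed point `α` with `S - α = c (z - α)^D`. Comparing multiplicities at `α` in
`T_D ∘ h₂ = h₂ ∘ S` forces `T_D - β = (z - β)^D` for `β = h₂(α)`, and this is incompatible with
`T_D(z + z⁻¹) = z^D + z^{-D}`.
-/

theorem iterComp_X_pow {R : Type*} [CommSemiring R] (d n : ℕ) :
    iterComp (X ^ d : R[X]) n = X ^ d ^ n := by
  induction n with
  | zero => simp [iterComp]
  | succ n ih => rw [iterComp, ih, X_pow_comp, ← pow_mul, ← pow_succ]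

theorem IsNormalizedChebyshev.iterComp {K : Type*} [Field K] {d : ℕ} {T : K[X]} (hd : 0 < d)
    (hT : IsNormalizedChebyshev d T) (n : ℕ) : IsNormalizedChebyshev (d ^ n) (iterComp T n) := by
  induction n with
  | zero => exact ⟨monic_X, natDegree_X, fun z _ => by simp [_root_.iterComp]⟩
  | succ n ih =>
    obtain ⟨hmon, hdeg, hval⟩ := ih
    refine ⟨hT.1.comp hmon (by rw [hdeg]; positivity), ?_, fun z hz => ?_⟩
    · rw [_root_.iterComp, natDegree_comp, hT.2.1, hdeg, pow_succ, mul_comm]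
    · rw [_root_.iterComp, eval_comp, hval z hz, inv_pow, hT.2.2 _ (pow_ne_zero _ hz), ← inv_pow,
        ← pow_mul, ← pow_mul, ← pow_succ]

namespace Polynomial

theorem rootMultiplicity_comp {R : Type*} [CommRing R] [IsDomain R] (q h : R[X]) (a : R) :
    (q.comp h).rootMultiplicity a =
      (h - C (h.eval a)).rootMultiplicity a * q.rootMultiplicity (h.eval a) := by
  set b := h.eval a
  rcases eq_or_ne q 0 with rfl | hq
  · simp
  rcases eq_or_ne (h - C b) 0 with hh | hh'
  · rw [sub_eq_zero.mp hh, comp_C, rootMultiplicity_C, ← sub_eq_zero.mp hh, sub_self,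
      rootMultiplicity_zero, zero_mul]
  obtain ⟨u, hu, hub⟩ := exists_eq_pow_rootMultiplicity_mul_and_not_dvd q hq b
  obtain ⟨v, hv, hva⟩ := exists_eq_pow_rootMultiplicity_mul_and_not_dvd _ hh' a
  rw [dvd_iff_isRoot] at hub hva
  have hcomp : q.comp h = (u.comp h * v ^ q.rootMultiplicity b) *
      (X - C a) ^ ((h - C b).rootMultiplicity a * q.rootMultiplicity b) := by
    conv_lhs => rw [hu, mul_comp, pow_comp, sub_comp, X_comp, C_comp, hv]
    ring
  have hunit : ¬ (u.comp h * v ^ q.rootMultiplicity b).IsRoot a := by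
    rw [IsRoot, eval_mul, eval_comp, eval_pow]
    exact mul_ne_zero hub (pow_ne_zero _ hva)
  rw [hcomp, rootMultiplicity_mul_X_sub_C_pow (fun h0 => hunit (by simp [h0])),
    rootMultiplicity_eq_zero hunit, zero_add]

variable {K : Type*} [Field K]

theorem eq_C_leadingCoeff_mul_X_sub_C_pow [IsAlgClosed K] {p : K[X]} {a : K}
    (h : ∀ b, p.IsRoot b → b = a) : p = C p.leadingCoeff * (X - C a) ^ p.natDegree := by
  have hroots : p.roots = Multiset.replicate p.natDegree a :=
    Multiset.eq_replicate.mpr ⟨IsAlgClosed.card_roots_eq_natDegree,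
      fun b hb => h b (isRoot_of_mem_roots hb)⟩
  conv_lhs => rw [← C_leadingCoeff_mul_prod_multiset_X_sub_C (p := p)
      IsAlgClosed.card_roots_eq_natDegree,
    hroots, Multiset.map_replicate, Multiset.prod_replicate]

theorem isRoot_derivative_iff_of_sub_C_eq [CharZero K] {S : K[X]} {w c a : K} {D : ℕ}
    (hc : c ≠ 0) (hD : 2 ≤ D) (hS : S - C w = C c * (X - C a) ^ D) (b : K) :
    (derivative S).IsRoot b ↔ b = a := by
  have hderiv : derivative S = C (c * D) * (X - C a) ^ (D - 1) := by
    rw [← sub_add_cancel S (C w), derivative_add, derivative_C, add_zero, hS, derivative_C_mul,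
      derivative_X_sub_C_pow, C_mul, mul_assoc]
  have hD' : (D : K) ≠ 0 := by exact_mod_cast (by omega : D ≠ 0)
  rw [hderiv, IsRoot, eval_mul, eval_C, eval_pow, eval_sub, eval_X, eval_C,
    mul_eq_zero_iff_left (mul_ne_zero hc hD'), pow_eq_zero_iff (by omega), sub_eq_zero]

section PowEqComp

variable {h S : K[X]} {D : ℕ}

theorem isRoot_eval_iff_of_pow_eq_comp (hD : D ≠ 0) (e : h ^ D = h.comp S) (z : K) :
    h.IsRoot (S.eval z) ↔ h.IsRoot z := by
  rw [IsRoot, ← eval_comp, ← e, eval_pow, pow_eq_zero_iff hD, IsRoot]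

theorem existsUnique_eval_eq_of_pow_eq_comp [IsAlgClosed K] (hD : D ≠ 0) (hh : h ≠ 0)
    (hS : 0 < S.natDegree) (e : h ^ D = h.comp S) {w : K} (hw : h.IsRoot w) :
    ∃! a, S.eval a = w := by
  classical
  have hsurj : ∀ y, ∃ a, S.eval a = y := fun y => by
    have hdeg := natDegree_pos_iff_degree_pos.mp hS
    obtain ⟨a, ha⟩ := IsAlgClosed.exists_root (S - C y) (by rw [degree_sub_C hdeg]; exact hdeg.ne')
    exact ⟨a, by simpa [sub_eq_zero] using ha⟩
  let Z := h.roots.toFinset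
  have hZ : ∀ a, S.eval a ∈ Z ↔ a ∈ Z := fun a => by
    simp only [Z, Multiset.mem_toFinset, mem_roots hh, isRoot_eval_iff_of_pow_eq_comp hD e]
  have hinj : Set.InjOn S.eval Z := by
    refine Finset.injOn_of_surjOn_of_card_le _ (fun z hz => (hZ z).mpr hz) (fun y hy => ?_) le_rfl
    obtain ⟨a, ha⟩ := hsurj y
    exact ⟨a, (hZ a).mp (ha ▸ hy), ha⟩
  have hwZ : w ∈ Z := by simpa [Z, mem_roots hh] using hw
  obtain ⟨a, ha⟩ := hsurj w
  exact ⟨a, ha, fun b hb => hinj ((hZ b).mp (hb ▸ hwZ)) ((hZ a).mp (ha ▸ hwZ)) (hb.trans ha.symm)⟩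

theorem exists_sub_C_eq_C_mul_X_sub_C_pow_of_pow_eq_comp [IsAlgClosed K] [CharZero K]
    (hD : 2 ≤ D) (hh : 0 < h.natDegree) (e : h ^ D = h.comp S) :
    ∃ α c, c ≠ 0 ∧ S - C α = C c * (X - C α) ^ D := by
  have hh0 : h ≠ 0 := ne_zero_of_natDegree_gt hh
  have hSD : S.natDegree = D := by
    have := congrArg natDegree e
    rw [natDegree_pow, natDegree_comp, mul_comm] at this
    exact (Nat.eq_of_mul_eq_mul_left hh this).symm
  have hS : 0 < S.natDegree := by omega
  have htotal : ∀ w, h.IsRoot w → ∃ a, h.IsRoot a ∧ S - C w = C S.leadingCoeff * (X - C a) ^ D := by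
    intro w hw
    obtain ⟨a, ha, huniq⟩ := existsUnique_eval_eq_of_pow_eq_comp (by omega) hh0 hS e hw
    refine ⟨a, (isRoot_eval_iff_of_pow_eq_comp (by omega) e a).mp (ha ▸ hw), ?_⟩
    have hlc : (S - C w).leadingCoeff = S.leadingCoeff :=
      leadingCoeff_sub_of_degree_lt (degree_C_le.trans_lt (natDegree_pos_iff_degree_pos.mp hS))
    rw [eq_C_leadingCoeff_mul_X_sub_C_pow (a := a) (p := S - C w)
      (fun b hb => huniq b (by simpa [sub_eq_zero] using hb)), natDegree_sub_C, hSD, hlc]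
  obtain ⟨w, hw⟩ := IsAlgClosed.exists_root h (natDegree_pos_iff_degree_pos.mp hh).ne'
  obtain ⟨α, hα, hSα⟩ := htotal w hw
  obtain ⟨a, -, hSa⟩ := htotal α hα
  have hc : S.leadingCoeff ≠ 0 := leadingCoeff_ne_zero.mpr (ne_zero_of_natDegree_gt hS)
  have haα : a = α := (isRoot_derivative_iff_of_sub_C_eq hc hD hSα a).mp
    ((isRoot_derivative_iff_of_sub_C_eq hc hD hSa a).mpr rfl)
  exact ⟨α, S.leadingCoeff, hc, haα ▸ hSa⟩

end PowEqComp

theorem sub_C_eq_X_sub_C_pow_of_comp_eq {p h S : K[X]} {α c : K} {D : ℕ} (hp : p.Monic)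
    (hpD : p.natDegree = D) (hD : 0 < D) (hh : 0 < h.natDegree) (hc : c ≠ 0)
    (hS : S - C α = C c * (X - C α) ^ D) (e : p.comp h = h.comp S) :
    p - C (h.eval α) = (X - C (h.eval α)) ^ D := by
  set β := h.eval α
  have hSα : S.eval α = α := by
    simpa [zero_pow hD.ne', sub_eq_zero] using congrArg (eval α) hS
  have hdeg : (C β).degree < p.degree :=
    degree_C_le.trans_lt (natDegree_pos_iff_degree_pos.mp (hpD ▸ hD))
  have hp' : (p - C β).Monic := hp.sub_of_left hdeg
  have hh' : h - C β ≠ 0 := fun h0 => by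
    rw [sub_eq_zero.mp h0, natDegree_C] at hh
    exact hh.false
  have hmult : (h - C β).rootMultiplicity α * (p - C β).rootMultiplicity β =
      D * (h - C β).rootMultiplicity α := by
    have := congrArg (rootMultiplicity α) (show (p - C β).comp h = (h - C β).comp S by
      rw [sub_comp, sub_comp, C_comp, C_comp, e])
    rwa [rootMultiplicity_comp, rootMultiplicity_comp, hSα, hS,
      rootMultiplicity_mul_X_sub_C_pow (C_ne_zero.mpr hc), rootMultiplicity_C, zero_add] at this
  have hpos : 0 < (h - C β).rootMultiplicity α := (rootMultiplicity_pos hh').mpr (by simp [β])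
  have hmD : (p - C β).rootMultiplicity β = D := by
    rw [mul_comm D] at hmult
    exact Nat.eq_of_mul_eq_mul_left hpos hmult
  refine eq_of_monic_of_dvd_of_natDegree_le ((monic_X_sub_C β).pow D) hp' ?_ ?_
  · exact hmD ▸ pow_rootMultiplicity_dvd _ _
  · rw [natDegree_sub_C, hpD, natDegree_pow, natDegree_X_sub_C, mul_one]

end Polynomial

theorem IsNormalizedChebyshev.ne_X_sub_C_pow_add_C {K : Type*} [Field K] [CharZero K] {D : ℕ}
    {T : K[X]} (hT : IsNormalizedChebyshev D T) (hD : 2 ≤ D) (β : K) :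
    T ≠ (X - C β) ^ D + C β := by
  intro hTβ
  -- `G(z) = z^D ((z + z⁻¹ - β)^D + β - z^D - z^{-D})` for `z ≠ 0`
  let G : K[X] := (X ^ 2 - C β * X + 1) ^ D + C β * X ^ D - X ^ (2 * D) - 1
  have hG : G = 0 := by
    refine Polynomial.funext fun z => ?_
    rcases eq_or_ne z 0 with rfl | hz
    · simp [G, zero_pow (by omega : D ≠ 0), zero_pow (by omega : 2 * D ≠ 0)]
    · have hval := hT.2.2 z hz
      rw [hTβ] at hval
      simp only [eval_add, eval_pow, eval_sub, eval_X, eval_C] at hval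
      have hfactor : z ^ 2 - β * z + 1 = z * (z + z⁻¹ - β) := by field_simp; ring
      simp only [G, eval_sub, eval_add, eval_mul, eval_pow, eval_X, eval_C, eval_one, eval_zero,
        hfactor, mul_pow]
      rw [show (z + z⁻¹ - β) ^ D = z ^ D + z⁻¹ ^ D - β by linear_combination hval]
      linear_combination (by rw [← mul_pow, mul_inv_cancel₀ hz, one_pow] : z ^ D * z⁻¹ ^ D = 1)
  have hβ : β = 0 := by
    have h : D = 0 ∨ β = 0 := by
      simpa [G, derivative_pow, zero_pow (by omega : D - 1 ≠ 0),
        zero_pow (by omega : 2 * D - 1 ≠ 0)] using congrArg (eval 0 ∘ derivative) hG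
    exact h.resolve_left (by omega)
  have h1 := congrArg (eval 1) hG
  simp only [G, hβ, map_zero, zero_mul, sub_zero, add_zero, eval_sub, eval_pow, eval_add, eval_X,
    one_pow, eval_one, eval_zero] at h1
  have h2 : 2 ^ D = 2 := by exact_mod_cast (by linear_combination h1 : (2 : K) ^ D = 2)
  have : 2 ^ 2 ≤ 2 ^ D := Nat.pow_le_pow_right two_pos hD
  omega

/-- For every `d ≥ 2`, the polynomials `z^d` and the normalized Chebyshev
polynomial `T_d` (the monic degree-`d` polynomial with `T_d(z + z⁻¹) = z^d + z^{-d}` for all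
`z ≠ 0`) are not intertwined. -/
theorem pow_not_intertwined_chebyshev (d : ℕ) (hd : 2 ≤ d) (T : Polynomial ℂ)
    (hT : IsNormalizedChebyshev d T) :
    ¬ Intertwined (X ^ d : Polynomial ℂ) T := by
  rintro ⟨n, S, h₁, h₂, hn, -, hh₁, hh₂, e₁, e₂⟩
  have hD : 2 ≤ d ^ n := hd.trans (Nat.le_self_pow hn.ne' d)
  rw [iterComp_X_pow, X_pow_comp] at e₁
  obtain ⟨α, c, hc, hS⟩ := exists_sub_C_eq_C_mul_X_sub_C_pow_of_pow_eq_comp hD hh₁ e₁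
  have hTn := hT.iterComp (by omega) n
  have hpow := sub_C_eq_X_sub_C_pow_of_comp_eq hTn.1 hTn.2.1 (by omega) hh₂ hc hS e₂
  exact hTn.ne_X_sub_C_pow_add_C hD (h₂.eval α) (sub_eq_iff_eq_add.mp hpow)
end
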